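/- For every continuous conical concave function Ψ : E → ℝ there exists a sequence {Ψ_n} of rational polytopal support functions with Ψ_n(x) ≤ Ψ_{n+1}(x) ≤ Ψ(x) for all n and x, such that Ψ_n → Ψ in the C-norm. In particular, rational polytopal support functions are dense in the cone of conical concave functions with respect to the C-norm. -/

import Mathlib

/-!
A conical concave `Ψ` is superlinear, so by Hahn–Banach it is the pointwise minimum of the
linear functions `⟪s, ·⟫` above it; their gradients `s` form a set `C` that is bounded because
`Ψ` grows at most linearly. Take `Ψₙ` to be the minimum of `⟪q, ·⟫` over the dyadic points `q` of
mesh `2⁻ⁿ` lying within `2 · 2⁻ⁿ` of `C` in every coordinate. Rounding a point within `2⁻ⁿ` of `C`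
to this grid, each coordinate down or up according to the sign of `x`, lowers `⟪·, x⟫`: applied to
the minimiser `s ∈ C` at `x` it gives `Ψₙ ≤ Ψ`, and applied to the points of the next, finer net it
gives `Ψₙ ≤ Ψₙ₊₁`. Conversely each such `q` is `2 · 2⁻ⁿ`-close to some `s ∈ C`, whence
`Ψ x ≤ Ψₙ x + 2d · 2⁻ⁿ ‖x‖`.
-/

open Set

noncomputable section

/-- `f` is conical: positively homogeneous of degree 1. -/
def Conical (d : ℕ) (f : EuclideanSpace ℝ (Fin d) → ℝ) : Prop :=
  ∀ c : ℝ, 0 ≤ c → ∀ x, f (c • x) = c * f x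

/-- The rational point of `ℝ^d` with coordinates `q`. -/
noncomputable def ratToE (d : ℕ) (q : Fin d → ℚ) : EuclideanSpace ℝ (Fin d) :=
  (WithLp.equiv 2 (Fin d → ℝ)).symm fun i => (q i : ℝ)

/-- `g` is a rational polytopal support function: `g(x) = min_{s ∈ S} ⟪s, x⟫` for some
finite nonempty set `S` of rational points. -/
def IsRatPolySupp (d : ℕ) (g : EuclideanSpace ℝ (Fin d) → ℝ) : Prop :=
  ∃ S : Finset (Fin d → ℚ), ∃ hS : S.Nonempty,
    ∀ x, g x = S.inf' hS fun q => (inner ℝ (ratToE d q) x : ℝ)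

open scoped RealInnerProductSpace

section Superlinear

variable {F : Type*}

lemma map_zero_of_pos_homogeneous [AddCommGroup F] [Module ℝ F] {f : F → ℝ}
    (hhom : ∀ c : ℝ, 0 < c → ∀ x, f (c • x) = c * f x) : f 0 = 0 := by
  have := hhom 2 two_pos 0
  rw [smul_zero] at this
  linarith

lemma ConcaveOn.add_le_map_add [AddCommGroup F] [Module ℝ F] {f : F → ℝ}
    (hf : ConcaveOn ℝ univ f) (hhom : ∀ c : ℝ, 0 < c → ∀ x, f (c • x) = c * f x) (x y : F) :
    f x + f y ≤ f (x + y) := by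
  have := hf.2 (mem_univ x) (mem_univ y) (by norm_num : (0 : ℝ) ≤ 1 / 2)
    (by norm_num : (0 : ℝ) ≤ 1 / 2) (by norm_num)
  rw [← smul_add (1 / 2 : ℝ) x y, hhom _ (by norm_num), smul_eq_mul, smul_eq_mul] at this
  linarith

lemma map_smul_le_mul_of_superadditive [AddCommGroup F] [Module ℝ F] {f : F → ℝ}
    (hhom : ∀ c : ℝ, 0 < c → ∀ x, f (c • x) = c * f x) (hadd : ∀ x y, f x + f y ≤ f (x + y))
    (c : ℝ) (x : F) : f (c • x) ≤ c * f x := by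
  have hf0 := map_zero_of_pos_homogeneous hhom
  rcases lt_trichotomy c 0 with hc | rfl | hc
  · have hneg : f (-x) ≤ -f x := by
      have := hadd x (-x)
      rw [add_neg_cancel, hf0] at this
      linarith
    rw [← neg_smul_neg, hhom (-c) (neg_pos.2 hc)]
    nlinarith [mul_le_mul_of_nonneg_left hneg (neg_nonneg.2 hc.le)]
  · simp [hf0]
  · exact (hhom c hc x).le

theorem exists_linearMap_ge_eq_of_superadditive [AddCommGroup F] [Module ℝ F] {f : F → ℝ}
    (hhom : ∀ c : ℝ, 0 < c → ∀ x, f (c • x) = c * f x) (hadd : ∀ x y, f x + f y ≤ f (x + y))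
    (x₀ : F) : ∃ g : F →ₗ[ℝ] ℝ, (∀ x, f x ≤ g x) ∧ g x₀ = f x₀ := by
  have hf0 := map_zero_of_pos_homogeneous hhom
  -- Hahn–Banach for the sublinear `-f`, from `c • x₀ ↦ -c * f x₀` on `ℝ ∙ x₀`.
  let ℓ : F →ₗ.[ℝ] ℝ := LinearPMap.mkSpanSingleton' x₀ (-f x₀) fun c hc => by
    rcases smul_eq_zero.1 hc with rfl | rfl <;> simp [hf0]
  have hℓ : ∀ y : ℓ.domain, ℓ y ≤ -f y := by
    rintro ⟨y, hy⟩
    obtain ⟨c, rfl⟩ := Submodule.mem_span_singleton.1 hy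
    rw [LinearPMap.mkSpanSingleton'_apply]
    simpa using map_smul_le_mul_of_superadditive hhom hadd c x₀
  obtain ⟨g, hgℓ, hg⟩ := exists_extension_of_le_sublinear ℓ (fun x => -f x)
    (fun c hc x => by simp [hhom c hc x]) (fun x y => by linarith [hadd x y]) hℓ
  refine ⟨-g, fun x => by simpa using neg_le_neg (hg x), ?_⟩
  have : g x₀ = -f x₀ := (hgℓ ⟨x₀, Submodule.mem_span_singleton_self x₀⟩).trans
    (LinearPMap.mkSpanSingleton'_apply_self _ _ _ _)
  simp [this]

lemma exists_abs_le_mul_norm_of_pos_homogeneous [NormedAddCommGroup F] [NormedSpace ℝ F]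
    {f : F → ℝ} (hhom : ∀ c : ℝ, 0 < c → ∀ x, f (c • x) = c * f x) (hf : ContinuousAt f 0) :
    ∃ L, 0 ≤ L ∧ ∀ x, |f x| ≤ L * ‖x‖ := by
  have hf0 := map_zero_of_pos_homogeneous hhom
  obtain ⟨δ, hδ, hball⟩ := Metric.continuousAt_iff.1 hf 1 one_pos
  refine ⟨2 / δ, by positivity, fun x => ?_⟩
  rcases eq_or_ne x 0 with rfl | hx
  · simp [hf0]
  have hx' : 0 < ‖x‖ := norm_pos_iff.2 hx
  set c := δ / (2 * ‖x‖) with hc_def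
  have hc : 0 < c := by positivity
  have hcfx : c * |f x| < 1 := by
    have hcx : dist (c • x) 0 < δ := by
      rw [dist_zero_right, norm_smul, Real.norm_of_nonneg hc.le, hc_def, div_mul_eq_mul_div,
        div_lt_iff₀ (by positivity)]
      nlinarith
    simpa [Real.dist_eq, hhom c hc, hf0, abs_mul, abs_of_pos hc] using hball hcx
  calc |f x| = c⁻¹ * (c * |f x|) := by field_simp
    _ ≤ c⁻¹ * 1 := by gcongr
    _ = 2 / δ * ‖x‖ := by rw [hc_def]; field_simp

end Superlinear

section InnerMajorants

variable {F : Type*} [NormedAddCommGroup F] [InnerProductSpace ℝ F]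

/-- For a conical concave `f` these are the supergradients of `f` at `0`. -/
def innerMajorants (f : F → ℝ) : Set F :=
  {s | ∀ x, f x ≤ ⟪s, x⟫}

theorem isLeast_inner_innerMajorants [FiniteDimensional ℝ F] {f : F → ℝ}
    (hhom : ∀ c : ℝ, 0 < c → ∀ x, f (c • x) = c * f x) (hadd : ∀ x y, f x + f y ≤ f (x + y))
    (x : F) : IsLeast ((fun s => ⟪s, x⟫) '' innerMajorants f) (f x) := by
  obtain ⟨g, hfg, hgx⟩ := exists_linearMap_ge_eq_of_superadditive hhom hadd x
  let s := (InnerProductSpace.toDual ℝ F).symm (LinearMap.toContinuousLinearMap g)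
  have hs : ∀ y, ⟪s, y⟫ = g y := fun y => InnerProductSpace.toDual_symm_apply
  refine ⟨⟨s, fun y => (hfg y).trans_eq (hs y).symm, (hs x).trans hgx⟩, ?_⟩
  rintro _ ⟨t, ht, rfl⟩
  exact ht x

lemma norm_le_of_mem_innerMajorants {f : F → ℝ} {L : ℝ} (hL : 0 ≤ L)
    (hf : ∀ x, |f x| ≤ L * ‖x‖) {s : F} (hs : s ∈ innerMajorants f) : ‖s‖ ≤ L := by
  have h := (abs_le.1 (hf (-s))).1.trans (hs (-s))
  rw [inner_neg_right, real_inner_self_eq_norm_sq, norm_neg] at h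
  nlinarith [norm_nonneg s]

lemma isBounded_innerMajorants {f : F → ℝ} (hhom : ∀ c : ℝ, 0 < c → ∀ x, f (c • x) = c * f x)
    (hf : ContinuousAt f 0) : Bornology.IsBounded (innerMajorants f) := by
  obtain ⟨L, hL, hfL⟩ := exists_abs_le_mul_norm_of_pos_homogeneous hhom hf
  exact (Metric.isBounded_closedBall (x := 0) (r := L)).subset fun s hs =>
    mem_closedBall_zero_iff.2 (norm_le_of_mem_innerMajorants hL hfL hs)

end InnerMajorants

section DyadicApproximation

variable {d : ℕ}

lemma real_inner_eq_sum_mul (u x : EuclideanSpace ℝ (Fin d)) : ⟪u, x⟫ = ∑ i, u i * x i := by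
  simp [PiLp.inner_apply, mul_comm]

lemma abs_inner_le_of_forall_abs_apply_le {u : EuclideanSpace ℝ (Fin d)} {r : ℝ}
    (hu : ∀ i, |u i| ≤ r) (x : EuclideanSpace ℝ (Fin d)) : |⟪u, x⟫| ≤ d * r * ‖x‖ := by
  rw [real_inner_eq_sum_mul]
  calc |∑ i, u i * x i| ≤ ∑ i, |u i * x i| := Finset.abs_sum_le_sum_abs _ _
    _ ≤ ∑ _i : Fin d, r * ‖x‖ := Finset.sum_le_sum fun i _ => by
        rw [abs_mul]
        exact mul_le_mul (hu i) (PiLp.norm_apply_le x i) (abs_nonneg _)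
          ((abs_nonneg _).trans (hu i))
    _ = d * r * ‖x‖ := by simp [mul_assoc]

lemma exists_int_abs_sub_le_one_mul_le (a x : ℝ) :
    ∃ k : ℤ, |(k : ℝ) - a| ≤ 1 ∧ k * x ≤ a * x := by
  rcases le_total 0 x with hx | hx
  · refine ⟨⌊a⌋, abs_le.2 ⟨?_, ?_⟩, mul_le_mul_of_nonneg_right (Int.floor_le a) hx⟩ <;>
      linarith [Int.floor_le a, Int.sub_one_lt_floor a]
  · refine ⟨⌈a⌉, abs_le.2 ⟨?_, ?_⟩, mul_le_mul_of_nonpos_right (Int.le_ceil a) hx⟩ <;>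
      linarith [Int.le_ceil a, Int.ceil_lt_add_one a]

def dyadic (n : ℕ) (k : Fin d → ℤ) : Fin d → ℚ :=
  fun i => k i / 2 ^ n

@[simp]
lemma ratToE_dyadic_apply (n : ℕ) (k : Fin d → ℤ) (i : Fin d) :
    ratToE d (dyadic n k) i = k i / 2 ^ n := by
  simp [ratToE, dyadic]

/-- Rounding each coordinate of `v` down or up according to the sign of the matching coordinate
of `x` lowers `⟪·, x⟫`. -/
lemma exists_dyadic_inner_le (n : ℕ) (v x : EuclideanSpace ℝ (Fin d)) :
    ∃ k : Fin d → ℤ, (∀ i, |(k i : ℝ) / 2 ^ n - v i| ≤ 1 / 2 ^ n) ∧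
      ⟪ratToE d (dyadic n k), x⟫ ≤ ⟪v, x⟫ := by
  choose k hk using fun i => exists_int_abs_sub_le_one_mul_le (2 ^ n * v i) (x i)
  have h2n : (0 : ℝ) < 2 ^ n := by positivity
  refine ⟨k, fun i => ?_, ?_⟩
  · have : (k i : ℝ) / 2 ^ n - v i = (k i - 2 ^ n * v i) / 2 ^ n := by field_simp
    rw [this, abs_div, abs_of_pos h2n]
    exact div_le_div_of_nonneg_right (hk i).1 h2n.le
  · simp only [real_inner_eq_sum_mul, ratToE_dyadic_apply]
    refine Finset.sum_le_sum fun i _ => ?_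
    rw [div_mul_eq_mul_div, div_le_iff₀ h2n]
    linarith [(hk i).2]

def dyadicNet (C : Set (EuclideanSpace ℝ (Fin d))) (n : ℕ) : Set (Fin d → ℤ) :=
  {k | ∃ s ∈ C, ∀ i, |(k i : ℝ) / 2 ^ n - s i| ≤ 2 / 2 ^ n}

variable {C : Set (EuclideanSpace ℝ (Fin d))}

lemma dyadicNet_finite (hC : Bornology.IsBounded C) (n : ℕ) : (dyadicNet C n).Finite := by
  obtain ⟨L, hL⟩ := isBounded_iff_forall_norm_le.1 hC
  set M : ℤ := ⌈(L + 2) * 2 ^ n⌉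
  refine (Set.finite_Icc (fun _ => -M) fun _ => M).subset fun k ⟨s, hs, hk⟩ => ?_
  have hkM : ∀ i, |(k i : ℝ)| ≤ M := fun i => by
    have hsi : |s i| ≤ L := (PiLp.norm_apply_le s i).trans (hL s hs)
    have h2 : 2 / 2 ^ n ≤ (2 : ℝ) := div_le_self zero_le_two (one_le_pow₀ one_le_two)
    have hki : |(k i : ℝ) / 2 ^ n| ≤ L + 2 := by
      linarith [abs_sub_abs_le_abs_sub ((k i : ℝ) / 2 ^ n) (s i), hk i]
    rw [abs_div, abs_of_pos (by positivity : (0 : ℝ) < 2 ^ n), div_le_iff₀ (by positivity)]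
      at hki
    exact hki.trans (Int.le_ceil _)
  exact ⟨fun i => by exact_mod_cast (abs_le.1 (hkM i)).1,
    fun i => by exact_mod_cast (abs_le.1 (hkM i)).2⟩

lemma exists_mem_dyadicNet_inner_le {n : ℕ} {s v : EuclideanSpace ℝ (Fin d)} (hs : s ∈ C)
    (hv : ∀ i, |v i - s i| ≤ 1 / 2 ^ n) (x : EuclideanSpace ℝ (Fin d)) :
    ∃ k ∈ dyadicNet C n, ⟪ratToE d (dyadic n k), x⟫ ≤ ⟪v, x⟫ := by
  obtain ⟨k, hk, hkx⟩ := exists_dyadic_inner_le n v x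
  refine ⟨k, ⟨s, hs, fun i => ?_⟩, hkx⟩
  calc |(k i : ℝ) / 2 ^ n - s i| ≤ |(k i : ℝ) / 2 ^ n - v i| + |v i - s i| := abs_sub_le _ _ _
    _ ≤ 1 / 2 ^ n + 1 / 2 ^ n := add_le_add (hk i) (hv i)
    _ = 2 / 2 ^ n := by ring

lemma exists_inner_le_inner_dyadic_add {n : ℕ} {k : Fin d → ℤ} (hk : k ∈ dyadicNet C n)
    (x : EuclideanSpace ℝ (Fin d)) :
    ∃ s ∈ C, ⟪s, x⟫ ≤ ⟪ratToE d (dyadic n k), x⟫ + 2 * d / 2 ^ n * ‖x‖ := by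
  obtain ⟨s, hs, hks⟩ := hk
  refine ⟨s, hs, ?_⟩
  have := abs_inner_le_of_forall_abs_apply_le (u := s - ratToE d (dyadic n k))
    (fun i => by simpa [abs_sub_comm] using hks i) x
  rw [inner_sub_left] at this
  linarith [(abs_le.1 this).2, show d * (2 / 2 ^ n) * ‖x‖ = 2 * d / 2 ^ n * ‖x‖ by ring]

def dyadicPoints (hC : Bornology.IsBounded C) (n : ℕ) : Finset (Fin d → ℚ) :=
  (dyadicNet_finite hC n).toFinset.image (dyadic n)

section

variable (hC : Bornology.IsBounded C)

lemma exists_mem_dyadicPoints_inner_le {n : ℕ} {s v : EuclideanSpace ℝ (Fin d)} (hs : s ∈ C)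
    (hv : ∀ i, |v i - s i| ≤ 1 / 2 ^ n) (x : EuclideanSpace ℝ (Fin d)) :
    ∃ q ∈ dyadicPoints hC n, ⟪ratToE d q, x⟫ ≤ ⟪v, x⟫ := by
  obtain ⟨k, hk, hkx⟩ := exists_mem_dyadicNet_inner_le hs hv x
  exact ⟨_, Finset.mem_image_of_mem _ ((dyadicNet_finite hC n).mem_toFinset.2 hk), hkx⟩

lemma exists_inner_le_of_mem_dyadicPoints {n : ℕ} {q : Fin d → ℚ} (hq : q ∈ dyadicPoints hC n)
    (x : EuclideanSpace ℝ (Fin d)) :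
    ∃ s ∈ C, ⟪s, x⟫ ≤ ⟪ratToE d q, x⟫ + 2 * d / 2 ^ n * ‖x‖ := by
  obtain ⟨k, hk, rfl⟩ := Finset.mem_image.1 hq
  exact exists_inner_le_inner_dyadic_add ((dyadicNet_finite hC n).mem_toFinset.1 hk) x

lemma dyadicPoints_nonempty (hne : C.Nonempty) (n : ℕ) : (dyadicPoints hC n).Nonempty := by
  obtain ⟨s, hs⟩ := hne
  obtain ⟨q, hq, -⟩ := exists_mem_dyadicPoints_inner_le hC (n := n) hs (v := s) (by simp) 0
  exact ⟨q, hq⟩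

def dyadicApprox (hne : C.Nonempty) (n : ℕ) (x : EuclideanSpace ℝ (Fin d)) : ℝ :=
  (dyadicPoints hC n).inf' (dyadicPoints_nonempty hC hne n) fun q => ⟪ratToE d q, x⟫

variable (hne : C.Nonempty)

lemma isRatPolySupp_dyadicApprox (n : ℕ) : IsRatPolySupp d (dyadicApprox hC hne n) :=
  ⟨_, _, fun _ => rfl⟩

lemma dyadicApprox_le_inner {n : ℕ} {s v : EuclideanSpace ℝ (Fin d)} (hs : s ∈ C)
    (hv : ∀ i, |v i - s i| ≤ 1 / 2 ^ n) (x : EuclideanSpace ℝ (Fin d)) :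
    dyadicApprox hC hne n x ≤ ⟪v, x⟫ := by
  obtain ⟨q, hq, hqx⟩ := exists_mem_dyadicPoints_inner_le hC hs hv x
  exact (Finset.inf'_le _ hq).trans hqx

lemma dyadicApprox_le_succ (n : ℕ) (x : EuclideanSpace ℝ (Fin d)) :
    dyadicApprox hC hne n x ≤ dyadicApprox hC hne (n + 1) x := by
  refine Finset.le_inf' _ _ fun q hq => ?_
  obtain ⟨k, hk, rfl⟩ := Finset.mem_image.1 hq
  obtain ⟨s, hs, hks⟩ := (dyadicNet_finite hC (n + 1)).mem_toFinset.1 hk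
  refine dyadicApprox_le_inner hC hne hs (fun i => ?_) x
  calc |ratToE d (dyadic (n + 1) k) i - s i| = |(k i : ℝ) / 2 ^ (n + 1) - s i| := by simp
    _ ≤ 2 / 2 ^ (n + 1) := hks i
    _ = 1 / 2 ^ n := by rw [pow_succ]; field_simp

lemma exists_inner_le_dyadicApprox_add (n : ℕ) (x : EuclideanSpace ℝ (Fin d)) :
    ∃ s ∈ C, ⟪s, x⟫ ≤ dyadicApprox hC hne n x + 2 * d / 2 ^ n * ‖x‖ := by
  obtain ⟨q, hq, hqx⟩ := Finset.exists_mem_eq_inf' (dyadicPoints_nonempty hC hne n)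
    fun q => ⟪ratToE d q, x⟫
  rw [dyadicApprox, hqx]
  exact exists_inner_le_of_mem_dyadicPoints hC hq x

end

theorem exists_ratPolySupp_approx_of_isLeast (hC : Bornology.IsBounded C)
    {f : EuclideanSpace ℝ (Fin d) → ℝ} (hf : ∀ x, IsLeast ((fun s => ⟪s, x⟫) '' C) (f x)) :
    ∃ Ψn : ℕ → EuclideanSpace ℝ (Fin d) → ℝ,
      (∀ n, IsRatPolySupp d (Ψn n)) ∧
      (∀ n x, Ψn n x ≤ Ψn (n + 1) x) ∧
      (∀ n x, Ψn n x ≤ f x) ∧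
      (∀ ε : ℝ, 0 < ε → ∃ N : ℕ, ∀ n ≥ N, ∀ x, |Ψn n x - f x| ≤ ε * ‖x‖) := by
  have hne : C.Nonempty := Set.image_nonempty.1 ⟨_, (hf 0).1⟩
  have approx_le n x : dyadicApprox hC hne n x ≤ f x := by
    obtain ⟨s, hs, hsx⟩ := (hf x).1
    exact hsx ▸ dyadicApprox_le_inner hC hne hs (by simp) x
  have le_approx_add n x : f x ≤ dyadicApprox hC hne n x + 2 * d / 2 ^ n * ‖x‖ := by
    obtain ⟨s, hs, hsx⟩ := exists_inner_le_dyadicApprox_add hC hne n x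
    exact ((hf x).2 ⟨s, hs, rfl⟩).trans hsx
  refine ⟨dyadicApprox hC hne, isRatPolySupp_dyadicApprox hC hne, dyadicApprox_le_succ hC hne,
    approx_le, fun ε hε => ?_⟩
  have hmesh : Filter.Tendsto (fun n : ℕ => 2 * (d : ℝ) / 2 ^ n) Filter.atTop (nhds 0) :=
    tendsto_const_nhds.div_atTop (tendsto_pow_atTop_atTop_of_one_lt one_lt_two)
  obtain ⟨N, hN⟩ := Filter.eventually_atTop.1 (hmesh.eventually (ge_mem_nhds hε))
  refine ⟨N, fun n hn x => abs_le.2 ⟨?_, ?_⟩⟩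
  · linarith [le_approx_add n x, mul_le_mul_of_nonneg_right (hN n hn) (norm_nonneg x)]
  · linarith [approx_le n x, mul_nonneg hε.le (norm_nonneg x)]

end DyadicApproximation

theorem stmt_15_general (d : ℕ)
    (Ψ : EuclideanSpace ℝ (Fin d) → ℝ)
    (hc : Continuous Ψ) (hcon : Conical d Ψ) (hcv : ConcaveOn ℝ Set.univ Ψ) :
    ∃ Ψn : ℕ → EuclideanSpace ℝ (Fin d) → ℝ,
      (∀ n, IsRatPolySupp d (Ψn n)) ∧
      (∀ n x, Ψn n x ≤ Ψn (n + 1) x) ∧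
      (∀ n x, Ψn n x ≤ Ψ x) ∧
      (∀ ε : ℝ, 0 < ε → ∃ N : ℕ, ∀ n ≥ N, ∀ x, |Ψn n x - Ψ x| ≤ ε * ‖x‖) := by
  have hhom : ∀ c : ℝ, 0 < c → ∀ x, Ψ (c • x) = c * Ψ x := fun c hc => hcon c hc.le
  exact exists_ratPolySupp_approx_of_isLeast (isBounded_innerMajorants hhom hc.continuousAt)
    (isLeast_inner_innerMajorants hhom (hcv.add_le_map_add hhom))

/-- Rational polytopal support functions are dense from below, monotonically, in the cone
of continuous conical concave functions with respect to the C-norm. -/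
theorem stmt_15 (d : ℕ) (hd : 1 ≤ d)
    (Ψ : EuclideanSpace ℝ (Fin d) → ℝ)
    (hc : Continuous Ψ) (hcon : Conical d Ψ) (hcv : ConcaveOn ℝ Set.univ Ψ) :
    ∃ Ψn : ℕ → EuclideanSpace ℝ (Fin d) → ℝ,
      (∀ n, IsRatPolySupp d (Ψn n)) ∧
      (∀ n x, Ψn n x ≤ Ψn (n + 1) x) ∧
      (∀ n x, Ψn n x ≤ Ψ x) ∧
      (∀ ε : ℝ, 0 < ε → ∃ N : ℕ, ∀ n ≥ N, ∀ x, |Ψn n x - Ψ x| ≤ ε * ‖x‖) :=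
  stmt_15_general d Ψ hc hcon hcv
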